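/- arXiv:1802.08791 — 8 statements merged into one kernel-verified Lean document; each statement's English description precedes it below -/
import Mathlib

section
/- Let n ≥ 2 and let T be a sequence of n-1 elements of Z/nZ such that no nonempty subsequence of T has sum zero (i.e., T is zero-sum free). Then all terms of T are equal to a single element g, and g generates Z/nZ. -/
lemma aux_bij (n : ℕ) (hn : 2 ≤ n) (l : List (ZMod n)) (hlen : l.length = n - 1)
    (h : ∀ S : Multiset (ZMod n), S ≤ ↑l → S ≠ 0 → S.sum ≠ 0) :
    Function.Bijective (fun k : Fin n => (l.take k.val).sum) := by
  haveI : NeZero n := ⟨by omega⟩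
  rw [Fintype.bijective_iff_injective_and_card]
  refine ⟨?_, by simp [ZMod.card]⟩
  have key : ∀ i j : Fin n, i.val < j.val →
      (l.take i.val).sum ≠ (l.take j.val).sum := by
    intro i j hlt hij
    set m := j.val - i.val with hm
    have hjlen : j.val ≤ l.length := by have := j.isLt; omega
    have htake : l.take j.val = l.take i.val ++ (l.drop i.val).take m := by
      rw [← List.take_add]
      congr 1
      omega
    have hblock : ((l.drop i.val).take m).sum = 0 := by
      have h2 : (l.take i.val).sum + ((l.drop i.val).take m).sum
          = (l.take j.val).sum := by
        rw [htake, List.sum_append]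
      have h3 := h2.trans hij.symm
      simpa using h3
    have hsub : List.Sublist ((l.drop i.val).take m) l :=
      ((l.drop i.val).take_sublist m).trans (l.drop_sublist i.val)
    have hne : ((l.drop i.val).take m) ≠ [] := by
      have : ((l.drop i.val).take m).length = min m (l.length - i.val) := by
        simp [List.length_take]
      intro hnil
      rw [hnil] at this
      simp at this
      omega
    refine h ↑((l.drop i.val).take m) ?_ ?_ ?_
    · exact (hsub.subperm : _)
    · simpa using hne
    · simpa using hblock
  intro i j hij
  by_contra hne
  rcases lt_or_gt_of_ne (fun h' : i.val = j.val => hne (Fin.ext h')) with h1 | h1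
  · exact key i j h1 hij
  · exact key j i h1 hij.symm

/-- A zero-sum free sequence of length `n-1` over `ZMod n` consists of `n-1`
copies of a single generator of `ZMod n`. -/
theorem stmt0 (n : ℕ) (hn : 2 ≤ n) (T : Multiset (ZMod n))
    (hcard : Multiset.card T = n - 1)
    (hzsf : ∀ S ≤ T, S ≠ 0 → S.sum ≠ 0) :
    ∃ g : ZMod n, (∀ x ∈ T, x = g) ∧ AddSubgroup.zmultiples g = ⊤ := by
  haveI : NeZero n := ⟨by omega⟩
  -- every element of T is nonzero
  have hmem_ne : ∀ a ∈ T, a ≠ 0 := by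
    intro a ha h0
    exact hzsf {a} (Multiset.singleton_le.mpr ha) (by simp) (by simp [h0])
  -- all elements of T are equal
  have hall : ∀ a ∈ T, ∀ b ∈ T, a = b := by
    intro a ha b hb
    by_contra hab
    have hbea : b ∈ T.erase a := Multiset.mem_erase_of_ne (fun h => hab h.symm) |>.mpr hb
    set R := (T.erase a).erase b with hR
    have hT1 : a ::ₘ b ::ₘ R = T := by
      rw [hR, Multiset.cons_erase hbea, Multiset.cons_erase ha]
    set r := R.toList with hr
    have hrT : (↑r : Multiset (ZMod n)) = R := Multiset.coe_toList R
    have hl1 : (↑(a :: b :: r) : Multiset (ZMod n)) = T := by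
      rw [← Multiset.cons_coe, ← Multiset.cons_coe, hrT, hT1]
    have hl2 : (↑(b :: a :: r) : Multiset (ZMod n)) = T := by
      rw [← Multiset.cons_coe, ← Multiset.cons_coe, hrT, Multiset.cons_swap, hT1]
    have hlen1 : (a :: b :: r).length = n - 1 := by
      have := congrArg Multiset.card hl1
      simpa [hcard] using this
    have hlen2 : (b :: a :: r).length = n - 1 := by
      have := congrArg Multiset.card hl2
      simpa [hcard] using this
    have hbij1 := aux_bij n hn (a :: b :: r) hlen1 (by rw [hl1]; exact hzsf)
    have hbij2 := aux_bij n hn (b :: a :: r) hlen2 (by rw [hl2]; exact hzsf)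
    obtain ⟨k, hk⟩ := hbij2.2 a
    simp only at hk
    match hkv : k.val, k.isLt with
    | 0, _ =>
      rw [hkv] at hk
      simp at hk
      exact hmem_ne a ha hk.symm
    | 1, _ =>
      rw [hkv] at hk
      simp at hk
      exact hab hk.symm
    | (m+2), hml =>
      rw [hkv] at hk
      have hsum1 : ((a :: b :: r).take (m+2)).sum = a := by
        simp only [List.take_succ_cons, List.sum_cons] at hk ⊢
        linear_combination hk
      have h1lt : 1 < n := by omega
      have heq : ((a :: b :: r).take ((⟨m+2, hml⟩ : Fin n) : ℕ)).sum
          = ((a :: b :: r).take ((⟨1, h1lt⟩ : Fin n) : ℕ)).sum := by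
        simpa using hsum1
      have := hbij1.1 heq
      simp [Fin.ext_iff] at this
  -- T is nonempty
  have hTne : T ≠ 0 := by
    intro h0
    rw [h0] at hcard
    simp at hcard
    omega
  obtain ⟨g, hg⟩ := Multiset.exists_mem_of_ne_zero hTne
  refine ⟨g, fun x hx => hall x hx g hg, ?_⟩
  -- T = replicate (n-1) g
  have hrep : T = Multiset.replicate (n - 1) g := by
    rw [Multiset.eq_replicate]
    exact ⟨hcard, fun x hx => hall x hx g hg⟩
  have hlrep : (↑(List.replicate (n - 1) g) : Multiset (ZMod n)) = T := by
    rw [hrep, Multiset.coe_replicate]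
  have hbij := aux_bij n hn (List.replicate (n - 1) g) (by simp)
    (by rw [hlrep]; exact hzsf)
  rw [AddSubgroup.eq_top_iff']
  intro x
  obtain ⟨k, hk⟩ := hbij.2 x
  simp only at hk
  rw [List.take_replicate, List.sum_replicate] at hk
  rw [← hk]
  exact AddSubgroup.nsmul_mem _ (AddSubgroup.mem_zmultiples g) _
end

section
/- Let n ≥ 2 and let T be a sequence of n elements of Z/nZ whose sum is 0, but such that no proper nonempty sub-multiset has sum 0 (i.e., T is a minimal zero-sum sequence). Then all terms of T are equal to a single element g, and g generates Z/nZ. -/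
open List in
lemma stmt1_key (n : ℕ) (hn : 2 ≤ n) (T : Multiset (ZMod n))
    (hcard : Multiset.card T = n) (hsum : T.sum = 0)
    (hmin : ∀ S ≤ T, S ≠ 0 → S ≠ T → S.sum ≠ 0)
    (L : List (ZMod n)) (hL : (↑L : Multiset (ZMod n)) = T) :
    Function.Bijective (fun k : Fin n => (L.take (k : ℕ)).sum) := by
  haveI : NeZero n := ⟨by omega⟩
  have hlen : L.length = n := by
    have := congrArg Multiset.card hL
    simpa using this.trans hcard
  have hinj : Function.Injective (fun k : Fin n => (L.take (k : ℕ)).sum) := by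
    have main : ∀ i j : Fin n, (i : ℕ) < (j : ℕ) →
        (L.take (i : ℕ)).sum = (L.take (j : ℕ)).sum → False := by
      intro i j hij heq
      set seg := (L.drop (i : ℕ)).take ((j : ℕ) - (i : ℕ)) with hseg
      have htake : L.take (j : ℕ) = L.take (i : ℕ) ++ seg := by
        rw [hseg, ← List.take_add]
        congr 1
        omega
      have hsumseg : seg.sum = 0 := by
        have : (L.take (j : ℕ)).sum = (L.take (i : ℕ)).sum + seg.sum := by
          rw [htake, List.sum_append]
        rw [← heq] at this
        exact (left_eq_add.mp this)
      have hsub : seg <+ L :=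
        ((L.drop (i : ℕ)).take_sublist _).trans (L.drop_sublist _)
      have hle : (↑seg : Multiset (ZMod n)) ≤ T := hL ▸ Multiset.coe_le.mpr hsub.subperm
      have hseglen : seg.length = (j : ℕ) - (i : ℕ) := by
        rw [hseg, List.length_take, List.length_drop, hlen]
        have := j.isLt
        omega
      have hne0 : (↑seg : Multiset (ZMod n)) ≠ 0 := by
        intro h
        have : seg.length = 0 := by simpa using congrArg Multiset.card h
        omega
      have hneT : (↑seg : Multiset (ZMod n)) ≠ T := by
        intro h
        have : seg.length = n := by
          have := congrArg Multiset.card h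
          simpa [hcard] using this
        have := j.isLt
        omega
      exact hmin _ hle hne0 hneT hsumseg
    intro i j h
    rcases lt_trichotomy (i : ℕ) (j : ℕ) with hlt | heq | hgt
    · exact absurd h (fun h => main i j hlt h)
    · exact Fin.ext heq
    · exact absurd h.symm (fun h => main j i hgt h)
  have hcards : Fintype.card (Fin n) = Fintype.card (ZMod n) := by
    simp [ZMod.card]
  exact (Fintype.bijective_iff_injective_and_card _).mpr ⟨hinj, hcards⟩

/-- A minimal zero-sum sequence of length `n` over `ZMod n` consists of `n`
copies of a single generator of `ZMod n`. -/
theorem stmt1 (n : ℕ) (hn : 2 ≤ n) (T : Multiset (ZMod n))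
    (hcard : Multiset.card T = n) (hsum : T.sum = 0)
    (hmin : ∀ S ≤ T, S ≠ 0 → S ≠ T → S.sum ≠ 0) :
    ∃ g : ZMod n, (∀ x ∈ T, x = g) ∧ AddSubgroup.zmultiples g = ⊤ := by
  haveI : NeZero n := ⟨by omega⟩
  have hT0 : T ≠ 0 := by
    intro h; rw [h] at hcard; simp at hcard; omega
  obtain ⟨g, hg⟩ := Multiset.exists_mem_of_ne_zero hT0
  have hall : ∀ x ∈ T, x = g := by
    intro x hx
    by_contra hxg
    have hx' : x ∈ T.erase g := (Multiset.mem_erase_of_ne hxg).mpr hx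
    set S := (T.erase g).erase x with hS
    have hT : T = g ::ₘ x ::ₘ S := by
      rw [hS, Multiset.cons_erase hx', Multiset.cons_erase hg]
    set R := S.toList with hR
    have hRS : (↑R : Multiset (ZMod n)) = S := S.coe_toList
    have hL1 : (↑(g :: x :: R) : Multiset (ZMod n)) = T := by
      show (g ::ₘ x ::ₘ (R : Multiset (ZMod n))) = T
      rw [hRS, hT]
    have hL2 : (↑(x :: g :: R) : Multiset (ZMod n)) = T := by
      show (x ::ₘ g ::ₘ (R : Multiset (ZMod n))) = T
      rw [hRS, hT, Multiset.cons_swap]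
    have f1 := stmt1_key n hn T hcard hsum hmin _ hL1
    have f2 := stmt1_key n hn T hcard hsum hmin _ hL2
    -- take-sums agree for k ≠ 1
    have hagree : ∀ k : Fin n, (k : ℕ) ≠ 1 →
        ((g :: x :: R).take (k : ℕ)).sum = ((x :: g :: R).take (k : ℕ)).sum := by
      intro k hk1
      rcases Nat.eq_zero_or_pos (k : ℕ) with h0 | hpos
      · simp [h0]
      · obtain ⟨m, hm⟩ : ∃ m, (k : ℕ) = m + 2 := ⟨(k : ℕ) - 2, by omega⟩
        rw [hm]
        simp [List.take_succ_cons]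
        ring
    have hone : (1 : ℕ) < n := by omega
    obtain ⟨k, hk⟩ := f1.surjective x
    have hk1 : (k : ℕ) ≠ 1 := by
      intro h
      have : ((g :: x :: R).take (k : ℕ)).sum = g := by
        rw [h]; simp
      simp only at hk
      rw [hk] at this
      exact hxg this
    have hx2 : ((x :: g :: R).take ((⟨1, hone⟩ : Fin n) : ℕ)).sum = x := by simp
    have : k = ⟨1, hone⟩ := f2.injective (by
      show ((x :: g :: R).take (k : ℕ)).sum = _
      simp only at hk
      rw [← hagree k hk1, hk, hx2])
    exact hk1 (by rw [this])
  refine ⟨g, hall, ?_⟩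
  have hrep : T = Multiset.replicate n g := by
    rw [Multiset.eq_replicate]
    exact ⟨hcard, hall⟩
  have hng : n • g = 0 := by
    rw [hrep, Multiset.sum_replicate] at hsum
    exact hsum
  have hdvd : addOrderOf g ∣ n := addOrderOf_dvd_of_nsmul_eq_zero hng
  have hpos : 0 < addOrderOf g := by
    exact addOrderOf_pos g
  have hord : addOrderOf g = n := by
    by_contra hne
    have hlt : addOrderOf g < n := lt_of_le_of_ne (Nat.le_of_dvd (by omega) hdvd) hne
    have hle : Multiset.replicate (addOrderOf g) g ≤ T := by
      rw [hrep]
      exact Multiset.replicate_le_replicate g |>.mpr hlt.le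
    refine hmin _ hle ?_ ?_ ?_
    · intro h
      have := congrArg Multiset.card h
      simp only [Multiset.card_replicate, Multiset.card_zero] at this
      omega
    · intro h
      have := congrArg Multiset.card h
      simp [hcard] at this
      omega
    · rw [Multiset.sum_replicate]
      exact addOrderOf_nsmul_eq_zero g
  apply AddSubgroup.eq_top_of_card_eq
  rw [Nat.card_zmultiples, hord, Nat.card_zmod]
end

section
/- Let n ≥ 2 and let T be a multiset of nonzero elements of Z/nZ with |T| ≥ n-1. Let U be a sub-multiset of T with sum 0 of maximal cardinality among zero-sum sub-multisets. If |T| - |U| = n - 1, then all terms of T are equal to a single element, which generates Z/nZ. -/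
open Multiset

section aux

variable {n : ℕ}

lemma psum_ne_zero (l : List (ZMod n))
    (hzs : ∀ A : Multiset (ZMod n), A ≤ (l : Multiset (ZMod n)) → A ≠ 0 → A.sum ≠ 0)
    (i : ℕ) (hi : i < l.length) : (l.take (i+1)).sum ≠ 0 := by
  have hsub : ((l.take (i+1) : List (ZMod n)) : Multiset (ZMod n)) ≤ (l : Multiset (ZMod n)) :=
    (l.take_sublist (i+1)).subperm
  have hlen : (l.take (i+1)).length = i + 1 := by
    rw [List.length_take]; omega
  have hne : ((l.take (i+1) : List (ZMod n)) : Multiset (ZMod n)) ≠ 0 := by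
    simp only [ne_eq, Multiset.coe_eq_zero]
    intro h
    rw [h] at hlen; simp at hlen
  have := hzs _ hsub hne
  simpa using this

lemma psum_inj (l : List (ZMod n))
    (hzs : ∀ A : Multiset (ZMod n), A ≤ (l : Multiset (ZMod n)) → A ≠ 0 → A.sum ≠ 0)
    {i j : ℕ} (hij : i < j) (hj : j < l.length) :
    (l.take (i+1)).sum ≠ (l.take (j+1)).sum := by
  intro h
  set s := (l.take (j+1)).drop (i+1) with hs
  have h1 : l.take (i+1) ++ s = l.take (j+1) := by
    have h2 : (l.take (j+1)).take (i+1) = l.take (i+1) := by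
      rw [List.take_take]; congr 1; omega
    rw [hs, ← h2, List.take_append_drop]
  have hsum : (l.take (i+1)).sum + s.sum = (l.take (j+1)).sum := by
    rw [← List.sum_append, h1]
  rw [← h, add_eq_left] at hsum
  have hsub : ((s : List (ZMod n)) : Multiset (ZMod n)) ≤ (l : Multiset (ZMod n)) :=
    ((List.drop_sublist _ _).trans (l.take_sublist _)).subperm
  have hslen : s.length = j - i := by
    rw [hs, List.length_drop, List.length_take]; omega
  have hne : ((s : List (ZMod n)) : Multiset (ZMod n)) ≠ 0 := by
    simp only [ne_eq, Multiset.coe_eq_zero]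
    intro hcon; rw [hcon] at hslen; simp at hslen; omega
  exact hzs _ hsub hne (by simpa using hsum)

/-- packaged: the prefix sum map into nonzero elements is bijective. -/
lemma psum_bij (hn : 2 ≤ n) (l : List (ZMod n)) (hl : l.length = n - 1)
    (hzs : ∀ A : Multiset (ZMod n), A ≤ (l : Multiset (ZMod n)) → A ≠ 0 → A.sum ≠ 0) :
    Function.Bijective (fun i : Fin (n-1) =>
      (⟨(l.take ((i : ℕ)+1)).sum, psum_ne_zero l hzs i (by rw [hl]; exact i.2)⟩ :
        {x : ZMod n // x ≠ 0})) := by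
  haveI : NeZero n := ⟨by omega⟩
  have hcardsub : Fintype.card {x : ZMod n // x ≠ 0} = n - 1 := by
    have := Fintype.card_subtype_compl (fun x : ZMod n => x = 0)
    simp only [Fintype.card_subtype_eq, ZMod.card] at this
    exact this
  have hinj : Function.Injective (fun i : Fin (n-1) =>
      (⟨(l.take ((i : ℕ)+1)).sum, psum_ne_zero l hzs i (by rw [hl]; exact i.2)⟩ :
        {x : ZMod n // x ≠ 0})) := by
    intro i j hij
    simp only [Subtype.mk.injEq] at hij
    by_contra hne
    have hvne : (i : ℕ) ≠ (j : ℕ) := fun hc => hne (Fin.ext hc)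
    rcases Nat.lt_or_ge (i : ℕ) (j : ℕ) with h | h
    · exact psum_inj l hzs h (by rw [hl]; exact j.2) hij
    · exact psum_inj l hzs (by omega) (by rw [hl]; exact i.2) hij.symm
  rw [Fintype.bijective_iff_injective_and_card]
  exact ⟨hinj, by simp [hcardsub]⟩

/-- all elements of a zero-sum-free multiset of size n-1 are equal to a generator. -/
lemma all_eq (hn : 2 ≤ n) (S : Multiset (ZMod n)) (hcardS : Multiset.card S = n - 1)
    (hzs : ∀ A : Multiset (ZMod n), A ≤ S → A ≠ 0 → A.sum ≠ 0) :
    ∃ g : ZMod n, (∀ x ∈ S, x = g) ∧ AddSubgroup.zmultiples g = ⊤ := by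
  haveI : NeZero n := ⟨by omega⟩
  have h1 : 0 < n - 1 := by omega
  have hSne : S ≠ 0 := by
    intro h; rw [h] at hcardS; simp at hcardS; omega
  obtain ⟨g, hg⟩ := Multiset.exists_mem_of_ne_zero hSne
  -- pairwise equality via the swap argument
  have pair : ∀ a ∈ S, ∀ b ∈ S.erase a, b = a := by
    intro a ha b hb
    set R := (S.erase a).erase b with hR
    have hS1 : b ::ₘ R = S.erase a := Multiset.cons_erase hb
    have hS2 : a ::ₘ b ::ₘ R = S := by rw [hS1]; exact Multiset.cons_erase ha
    obtain ⟨r, hr⟩ : ∃ r : List (ZMod n), (r : Multiset (ZMod n)) = R :=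
      ⟨R.toList, R.coe_toList⟩
    have hl1 : ((a :: b :: r : List (ZMod n)) : Multiset (ZMod n)) = S := by
      rw [← Multiset.cons_coe, ← Multiset.cons_coe, hr]; exact hS2
    have hl2 : ((b :: a :: r : List (ZMod n)) : Multiset (ZMod n)) = S := by
      rw [← Multiset.cons_coe, ← Multiset.cons_coe, hr, Multiset.cons_swap]; exact hS2
    have hlen1 : (a :: b :: r : List (ZMod n)).length = n - 1 := by
      have := congrArg Multiset.card hl1
      simpa [hcardS] using this
    have hlen2 : (b :: a :: r : List (ZMod n)).length = n - 1 := by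
      have := congrArg Multiset.card hl2
      simpa [hcardS] using this
    have hzs1 : ∀ A : Multiset (ZMod n),
        A ≤ ((a :: b :: r : List (ZMod n)) : Multiset (ZMod n)) → A ≠ 0 → A.sum ≠ 0 := by
      rw [hl1]; exact hzs
    have hzs2 : ∀ A : Multiset (ZMod n),
        A ≤ ((b :: a :: r : List (ZMod n)) : Multiset (ZMod n)) → A ≠ 0 → A.sum ≠ 0 := by
      rw [hl2]; exact hzs
    have F1 := psum_bij hn _ hlen1 hzs1
    have F2 := psum_bij hn _ hlen2 hzs2
    have ha0 : a ≠ 0 := by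
      have := hzs {a} (by rw [← hl1]; exact Multiset.singleton_le.mpr (by simp)) (by simp)
      simpa using this
    obtain ⟨j, hj⟩ := F2.2 ⟨a, ha0⟩
    have hj' : ((b :: a :: r : List (ZMod n)).take ((j : ℕ)+1)).sum = a := by
      have := congrArg Subtype.val hj; simpa using this
    rcases Nat.eq_zero_or_pos (j : ℕ) with hj0 | hjpos
    · rw [hj0] at hj'
      simpa using hj'
    · exfalso
      obtain ⟨k, hk⟩ : ∃ k, (j : ℕ) = k + 1 := ⟨(j : ℕ) - 1, by omega⟩
      have hsum_eq : ((a :: b :: r : List (ZMod n)).take ((j : ℕ)+1)).sum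
          = ((b :: a :: r : List (ZMod n)).take ((j : ℕ)+1)).sum := by
        rw [hk]
        simp [List.take_succ_cons]
        ring
      have hf1j : ((a :: b :: r : List (ZMod n)).take ((j : ℕ)+1)).sum = a := by
        rw [hsum_eq, hj']
      have hf10 : ((a :: b :: r : List (ZMod n)).take ((0 : ℕ)+1)).sum = a := by simp
      have := F1.1 (a₁ := j) (a₂ := ⟨0, h1⟩) (by
        apply Subtype.ext
        simp only []
        rw [hf1j]
        exact hf10.symm)
      rw [this] at hk
      simp at hk
  have hall : ∀ x ∈ S, x = g := by
    intro x hx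
    by_cases hxg : x = g
    · exact hxg
    · exact pair g hg x ((Multiset.mem_erase_of_ne hxg).mpr hx)
  refine ⟨g, hall, ?_⟩
  -- generator
  have hrepl : S = Multiset.replicate (n-1) g := Multiset.eq_replicate.mpr ⟨hcardS, hall⟩
  have hlrep : ((List.replicate (n-1) g : List (ZMod n)) : Multiset (ZMod n)) = S := by
    rw [Multiset.coe_replicate, hrepl]
  have hzsl : ∀ A : Multiset (ZMod n),
      A ≤ ((List.replicate (n-1) g : List (ZMod n)) : Multiset (ZMod n)) → A ≠ 0 → A.sum ≠ 0 := by
    rw [hlrep]; exact hzs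
  have F := psum_bij hn _ List.length_replicate hzsl
  rw [AddSubgroup.eq_top_iff']
  intro x
  by_cases hx0 : x = 0
  · rw [hx0]; exact zero_mem _
  · obtain ⟨i, hi⟩ := F.2 ⟨x, hx0⟩
    have hi' : (((List.replicate (n-1) g : List (ZMod n))).take ((i : ℕ)+1)).sum = x := by
      have := congrArg Subtype.val hi; simpa using this
    have htk : (((List.replicate (n-1) g : List (ZMod n))).take ((i : ℕ)+1)).sum
        = ((i : ℕ)+1) • g := by
      rw [List.take_replicate, List.sum_replicate]
      congr 1
      omega
    rw [htk] at hi'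
    rw [← hi']
    exact AddSubgroup.nsmul_mem _ (AddSubgroup.mem_zmultiples g) _

end aux

/-- Let `T` be a multiset of nonzero elements of `ZMod n` of cardinality at least `n-1`,
and `U` a zero-sum sub-multiset of maximal cardinality.  If `|T| - |U| = n - 1`, then all
terms of `T` are equal to a single generator of `ZMod n`. -/
theorem stmt2 (n : ℕ) (hn : 2 ≤ n) (T : Multiset (ZMod n))
    (hT0 : ∀ x ∈ T, x ≠ 0) (hcard : n - 1 ≤ Multiset.card T)
    (U : Multiset (ZMod n)) (hUT : U ≤ T) (hUsum : U.sum = 0)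
    (hUmax : ∀ V ≤ T, V.sum = 0 → Multiset.card V ≤ Multiset.card U)
    (hdiff : Multiset.card T - Multiset.card U = n - 1) :
    ∃ g : ZMod n, (∀ x ∈ T, x = g) ∧ AddSubgroup.zmultiples g = ⊤ := by
  haveI : NeZero n := ⟨by omega⟩
  set S := T - U with hSdef
  have hScard : Multiset.card S = n - 1 := by
    rw [hSdef, Multiset.card_sub hUT]; exact hdiff
  have hzs : ∀ A : Multiset (ZMod n), A ≤ S → A ≠ 0 → A.sum ≠ 0 := by
    intro A hA hA0 hAs
    have hV : U + A ≤ T := by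
      have h := add_le_add_right hA U
      rwa [hSdef, add_tsub_cancel_of_le hUT] at h
    have hmax := hUmax (U + A) hV (by rw [Multiset.sum_add, hUsum, hAs, add_zero])
    rw [Multiset.card_add] at hmax
    have hpos : 0 < Multiset.card A := Multiset.card_pos.mpr hA0
    omega
  obtain ⟨g, hgS, hgtop⟩ := all_eq hn S hScard hzs
  refine ⟨g, ?_, hgtop⟩
  have hrepl : S = Multiset.replicate (n-1) g := Multiset.eq_replicate.mpr ⟨hScard, hgS⟩
  have hTsplit : T = U + S := by rw [hSdef, add_tsub_cancel_of_le hUT]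
  intro x hx
  rw [hTsplit, Multiset.mem_add] at hx
  rcases hx with hxU | hxS
  · -- x ∈ U : use maximality
    have hxT : x ∈ T := Multiset.mem_of_le hUT hxU
    have hx0 : x ≠ 0 := hT0 x hxT
    -- write x = k • g with 1 ≤ k < n
    have hxmem : x ∈ AddSubgroup.zmultiples g := by rw [hgtop]; trivial
    obtain ⟨m, hm⟩ := AddSubgroup.mem_zmultiples_iff.mp hxmem
    set c : ZMod n := (m : ZMod n) with hc
    have hcx : c * g = x := by rw [hc, ← hm, zsmul_eq_mul]
    set k := c.val with hk
    have hkc : (k : ZMod n) = c := by rw [hk, ZMod.natCast_val, ZMod.cast_id]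
    have hkg : k • g = x := by rw [nsmul_eq_mul, hkc, hcx]
    have hklt : k < n := ZMod.val_lt c
    have hkpos : 0 < k := by
      rcases Nat.eq_zero_or_pos k with h0 | h
      · exfalso
        rw [h0] at hkg
        simp at hkg
        exact hx0 hkg.symm
      · exact h
    -- build V
    set V := (U.erase x) + Multiset.replicate k g with hVdef
    have hrk : Multiset.replicate k g ≤ T - U.erase x := by
      calc Multiset.replicate k g ≤ Multiset.replicate (n-1) g :=
            (Multiset.replicate_le_replicate g).mpr (by omega)
        _ = S := hrepl.symm
        _ = T - U := hSdef
        _ ≤ T - U.erase x := tsub_le_tsub_left (Multiset.erase_le x U) T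
    have hVT : V ≤ T := by
      have h := add_le_add_right hrk (U.erase x)
      rwa [add_tsub_cancel_of_le ((Multiset.erase_le x U).trans hUT)] at h
    have hVsum : V.sum = 0 := by
      have he : x + (U.erase x).sum = U.sum := Multiset.sum_erase hxU
      rw [hVdef, Multiset.sum_add, Multiset.sum_replicate, hkg]
      rw [hUsum] at he
      linear_combination he
    have hVcard := hUmax V hVT hVsum
    rw [hVdef, Multiset.card_add, Multiset.card_replicate,
      Multiset.card_erase_of_mem hxU] at hVcard
    have hUpos : 0 < Multiset.card U := Multiset.card_pos.mpr (by
      intro h0; rw [h0] at hxU; simp at hxU)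
    have hk1 : k = 1 := by
      rw [Nat.pred_eq_sub_one] at hVcard
      omega
    rw [hk1, one_nsmul] at hkg
    exact hkg.symm
  · exact hgS x hxS
end

section
/- Let T = (h_1, ..., h_ℓ) be a finite multiset of positive integers that is not behaving and satisfies h_1 + ... + h_ℓ = 2ℓ. Then either T consists of ℓ-1 copies of 1 together with one copy of ℓ+1, or T consists of ℓ copies of 2. -/
/-- A multiset of positive integers is *behaving* if its nonempty subset sums
are exactly `{1, …, Σ T}`. -/
def Behaving (T : Multiset ℕ) : Prop :=
  {s : ℕ | ∃ D ≤ T, D ≠ 0 ∧ D.sum = s} = Set.Icc 1 T.sum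

lemma behaving_zero : Behaving 0 := by
  unfold Behaving
  ext s
  simp [Multiset.le_zero]

lemma exists_max_mem (T : Multiset ℕ) (h : T ≠ 0) : ∃ a ∈ T, ∀ x ∈ T, x ≤ a := by
  induction T using Multiset.induction with
  | empty => exact absurd rfl h
  | cons a s ih =>
    rcases eq_or_ne s 0 with rfl | hs
    · exact ⟨a, by simp, by simp⟩
    · obtain ⟨m, hm, hmax⟩ := ih hs
      refine ⟨max a m, ?_, ?_⟩
      · rcases le_total a m with h' | h'
        · simp [max_eq_right h', Multiset.mem_cons, hm]
        · simp [max_eq_left h']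
      · intro x hx
        rcases Multiset.mem_cons.mp hx with rfl | hx
        · exact le_max_left _ _
        · exact le_trans (hmax x hx) (le_max_right _ _)

lemma sum_mem_Icc {T D : Multiset ℕ} (hpos : ∀ h ∈ T, 0 < h) (hD : D ≤ T) (hne : D ≠ 0) :
    D.sum ∈ Set.Icc 1 T.sum := by
  constructor
  · obtain ⟨x, hx⟩ := Multiset.exists_mem_of_ne_zero hne
    have hx1 : 1 ≤ x := hpos x (Multiset.mem_of_le hD hx)
    calc 1 ≤ x := hx1
      _ ≤ D.sum := Multiset.single_le_sum (fun y _ => Nat.zero_le y) x hx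
  · obtain ⟨u, hu⟩ := Multiset.le_iff_exists_add.mp hD
    rw [hu, Multiset.sum_add]
    exact Nat.le_add_right _ _

lemma behaving_step {T : Multiset ℕ} (hpos : ∀ h ∈ T, 0 < h) {a : ℕ} (haT : a ∈ T)
    (hle : a ≤ (T.erase a).sum + 1) (hB : Behaving (T.erase a)) : Behaving T := by
  have hT : a ::ₘ T.erase a = T := Multiset.cons_erase haT
  unfold Behaving at hB ⊢
  ext s
  simp only [Set.mem_setOf_eq]
  constructor
  · rintro ⟨D, hD, hne, rfl⟩
    exact sum_mem_Icc hpos hD hne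
  · rintro ⟨hs1, hs2⟩
    have hsum : T.sum = a + (T.erase a).sum := by rw [← hT]; simp
    by_cases hsmall : s ≤ (T.erase a).sum
    · rcases Nat.eq_zero_or_pos (T.erase a).sum with h0 | _
      · -- then s ≤ 0 contradicts hs1 unless impossible
        omega
      have : s ∈ Set.Icc 1 (T.erase a).sum := ⟨hs1, hsmall⟩
      rw [← hB] at this
      obtain ⟨D, hD, hne, hDs⟩ := this
      exact ⟨D, le_trans hD (Multiset.erase_le a T), hne, hDs⟩
    · push_neg at hsmall
      have has : a ≤ s := by omega
      rcases eq_or_lt_of_le has with rfl | hlt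
      · exact ⟨{a}, by simpa using haT, by simp, by simp⟩
      · have : s - a ∈ Set.Icc 1 (T.erase a).sum := by
          constructor <;> omega
        rw [← hB] at this
        obtain ⟨D, hD, hne, hDs⟩ := this
        refine ⟨a ::ₘ D, ?_, by simp, by simp [hDs]; omega⟩
        rw [← hT]
        exact Multiset.cons_le_cons a hD

lemma decomp (T : Multiset ℕ) (hpos : ∀ h ∈ T, 0 < h) (hnb : ¬ Behaving T) :
    ∃ A B : Multiset ℕ, T = A + B ∧ B ≠ 0 ∧ ∀ b ∈ B, A.sum + 2 ≤ b := by
  induction T using Multiset.strongInductionOn with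
  | ih T ih =>
    rcases eq_or_ne T 0 with rfl | hT0
    · exact absurd behaving_zero hnb
    obtain ⟨a, haT, hmax⟩ := exists_max_mem T hT0
    have hT : a ::ₘ T.erase a = T := Multiset.cons_erase haT
    by_cases hc : (T.erase a).sum + 2 ≤ a
    · refine ⟨T.erase a, {a}, ?_, by simp, ?_⟩
      · rw [← hT]; rw [add_comm]; simp
      · intro b hb
        rw [Multiset.mem_singleton] at hb
        subst hb; exact hc
    · push_neg at hc
      have hlt : T.erase a < T := Multiset.erase_lt.mpr haT
      have hpos' : ∀ h ∈ T.erase a, 0 < h := fun h hh => hpos h (Multiset.mem_of_mem_erase hh)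
      have hnb' : ¬ Behaving (T.erase a) := fun hB =>
        hnb (behaving_step hpos haT (by omega) hB)
      obtain ⟨A, B, hAB, hBne, hB⟩ := ih (T.erase a) hlt hpos' hnb'
      refine ⟨A, a ::ₘ B, ?_, by simp, ?_⟩
      · rw [← hT, hAB]; rw [Multiset.add_cons]
      · intro b hb
        rcases Multiset.mem_cons.mp hb with rfl | hb
        · obtain ⟨c, hc'⟩ := Multiset.exists_mem_of_ne_zero hBne
          have h1 := hB c hc'
          have h2 : c ≤ b := hmax c (by
            apply Multiset.mem_of_mem_erase
            rw [hAB]; exact Multiset.mem_add.mpr (Or.inr hc'))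
          omega
        · exact hB b hb

/-- A non-behaving multiset of positive integers of length `ℓ` and sum exactly `2ℓ`
is either `ℓ-1` copies of `1` together with one copy of `ℓ+1`, or `ℓ` copies of `2`. -/
theorem stmt9 (T : Multiset ℕ) (hpos : ∀ h ∈ T, 0 < h)
    (hnb : ¬ Behaving T) (hsum : T.sum = 2 * Multiset.card T) :
    T = Multiset.replicate (Multiset.card T - 1) 1 + {Multiset.card T + 1} ∨
    T = Multiset.replicate (Multiset.card T) 2 := by
  obtain ⟨A, B, hAB, hBne, hB⟩ := decomp T hpos hnb
  have hposA : ∀ h ∈ A, 0 < h := fun h hh => hpos h (by rw [hAB]; exact Multiset.mem_add.mpr (Or.inl hh))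
  have hcardA : Multiset.card A ≤ A.sum := by
    calc Multiset.card A = (A.map (fun _ => 1)).sum := by simp
      _ ≤ (A.map id).sum := Multiset.sum_map_le_sum_map _ _ (fun i hi => hposA i hi)
      _ = A.sum := by simp
  have hBsum : (Multiset.card B) * (A.sum + 2) ≤ B.sum := by
    calc (Multiset.card B) * (A.sum + 2) = (B.map (fun _ => A.sum + 2)).sum := by
          simp [mul_comm]
      _ ≤ (B.map id).sum := Multiset.sum_map_le_sum_map _ _ (fun i hi => hB i hi)
      _ = B.sum := by simp
  have hcardB : 1 ≤ Multiset.card B := by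
    rcases Nat.eq_zero_or_pos (Multiset.card B) with h0 | h
    · exact absurd (Multiset.card_eq_zero.mp h0) hBne
    · exact h
  have hsum' : A.sum + B.sum = 2 * (Multiset.card A + Multiset.card B) := by
    rw [← Multiset.sum_add, ← hAB, hsum, hAB]; simp
  set k := Multiset.card A with hk
  set m := Multiset.card B with hm
  set S := A.sum with hS
  -- (m+1)*S ≤ 2k
  have key : (m + 1) * S ≤ 2 * k := by nlinarith
  rcases Nat.eq_zero_or_pos S with hS0 | hSpos
  · -- A = 0, T = B, all elements ≥ 2, sum = 2m
    have hA0 : A = 0 := by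
      by_contra hA
      obtain ⟨x, hx⟩ := Multiset.exists_mem_of_ne_zero hA
      have := hposA x hx
      have := Multiset.single_le_sum (fun y _ => Nat.zero_le y) x hx
      omega
    right
    have hk0 : k = 0 := by rw [hk, hA0]; simp
    have hTB : T = B := by rw [hAB, hA0, zero_add]
    have hsum2 : T.sum = 2 * Multiset.card T := hsum
    have hBT : ∀ b ∈ T, 2 ≤ b := by
      intro b hb
      have := hB b (by rwa [← hTB]); omega
    rw [Multiset.eq_replicate]
    refine ⟨rfl, fun b hb => ?_⟩
    by_contra hb2
    have hb3 : 3 ≤ b := by have := hBT b hb; omega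
    have hrest : 2 * (Multiset.card (T.erase b)) ≤ (T.erase b).sum := by
      calc 2 * (Multiset.card (T.erase b)) = ((T.erase b).map (fun _ => 2)).sum := by
            simp [mul_comm]
        _ ≤ ((T.erase b).map id).sum := Multiset.sum_map_le_sum_map _ _
            (fun i hi => hBT i (Multiset.mem_of_mem_erase hi))
        _ = (T.erase b).sum := by simp
    have hcons : b ::ₘ T.erase b = T := Multiset.cons_erase hb
    have hBs : T.sum = b + (T.erase b).sum := by rw [← hcons]; simp
    have hBc : Multiset.card T = Multiset.card (T.erase b) + 1 := by
      rw [← hcons]; simp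
    omega
  · have hm1 : m = 1 := by
      have h2 : (m + 1) * S ≤ 2 * S := le_trans key (by omega)
      have h3 := Nat.le_of_mul_le_mul_right h2 hSpos
      omega
    have hSk : S = k := by
      rw [hm1] at key; omega
    -- A = replicate k 1
    have hA : A = Multiset.replicate k 1 := by
      rw [Multiset.eq_replicate]
      refine ⟨rfl, fun x hx => ?_⟩
      by_contra hx1
      have hx2 : 2 ≤ x := by have := hposA x hx; omega
      have hrest : Multiset.card (A.erase x) ≤ (A.erase x).sum := by
        calc Multiset.card (A.erase x) = ((A.erase x).map (fun _ => 1)).sum := by simp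
          _ ≤ ((A.erase x).map id).sum := Multiset.sum_map_le_sum_map _ _
              (fun i hi => hposA i (Multiset.mem_of_mem_erase hi))
          _ = (A.erase x).sum := by simp
      have hcons : x ::ₘ A.erase x = A := Multiset.cons_erase hx
      have hAs : A.sum = x + (A.erase x).sum := by rw [← hcons]; simp
      have hAc : Multiset.card A = Multiset.card (A.erase x) + 1 := by rw [← hcons]; simp
      omega
    obtain ⟨b, hb⟩ := Multiset.card_eq_one.mp hm1
    have hbval : b = k + 2 := by
      have h4 := hsum'; rw [hb, hm1] at h4; simp at h4; omega
    left
    have hcardT : Multiset.card T = k + 1 := by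
      rw [hAB, hb]; simp [← hk]
    rw [hcardT, hAB, hA, hb, hbval]
    simp
end

section
/- Let S be the cyclic semigroup generated by x with index k and period n. The Erdős–Burgess constant of S equals ⌈k/n⌉·n; that is, every multiset of ⌈k/n⌉·n positive integers (representing terms m·x) contains a nonempty sub-multiset L with n ∣ Σ_{m∈L} m and Σ_{m∈L} m ≥ ⌈k/n⌉·n, and there exists a multiset of ⌈k/n⌉·n − 1 positive integers containing no such nonempty sub-multiset. -/
def ceilDivNat (k n : ℕ) : ℕ := (k + n - 1) / n

lemma aux_block (n : ℕ) (hn : 1 ≤ n) (l : List ℕ) (hl : n ≤ l.length) :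
    ∃ L : Multiset ℕ, L ≤ ↑l ∧ L ≠ 0 ∧ n ∣ L.sum := by
  have hpair : ∃ i j : Fin (n+1), (i:ℕ) < j ∧
      (l.take i).sum % n = (l.take j).sum % n := by
    have h := Fintype.exists_ne_map_eq_of_card_lt
      (fun j : Fin (n+1) => (⟨(l.take j).sum % n, Nat.mod_lt _ hn⟩ : Fin n)) (by simp)
    obtain ⟨i, j, hij, h⟩ := h
    have h' : (l.take i).sum % n = (l.take j).sum % n := by
      simpa using congrArg Fin.val h
    rcases lt_or_gt_of_ne (Fin.val_ne_of_ne hij) with hlt | hlt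
    · exact ⟨i, j, hlt, h'⟩
    · exact ⟨j, i, hlt, h'.symm⟩
  obtain ⟨i, j, hij, hmod⟩ := hpair
  have hjle : (j : ℕ) ≤ n := Nat.lt_succ_iff.mp j.isLt
  refine ⟨↑((l.take j).drop i), ?_, ?_, ?_⟩
  · exact Multiset.coe_le.mpr (((l.take (j:ℕ)).drop_sublist (i:ℕ)).trans
      ((l.take_sublist (j:ℕ)))).subperm
  · have hlen : ((l.take (j:ℕ)).drop (i:ℕ)).length = (j:ℕ) - i := by
      simp [List.length_take]; omega
    simp only [ne_eq, Multiset.coe_eq_zero]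
    intro h
    rw [h] at hlen
    simp at hlen
    omega
  · have hsplit : ((l.take (j:ℕ)).take (i:ℕ)).sum + ((l.take (j:ℕ)).drop (i:ℕ)).sum
        = (l.take (j:ℕ)).sum := List.sum_take_add_sum_drop _ _
    have htt : (l.take (j:ℕ)).take (i:ℕ) = l.take (i:ℕ) := by
      rw [List.take_take]; congr 1; omega
    rw [htt] at hsplit
    set a := (l.take (i:ℕ)).sum
    set s := ((l.take (j:ℕ)).drop (i:ℕ)).sum with hs
    have hmod' : a ≡ a + s [MOD n] := by
      unfold Nat.ModEq
      rw [hsplit]; exact hmod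
    have := (Nat.modEq_iff_dvd' (Nat.le_add_right a s)).mp hmod'
    simpa using this

lemma aux_main (n : ℕ) (hn : 1 ≤ n) : ∀ q (T : Multiset ℕ), (∀ m ∈ T, 1 ≤ m) →
    Multiset.card T = q * n → ∃ L ≤ T, n ∣ L.sum ∧ q * n ≤ L.sum := by
  intro q
  induction q with
  | zero => intro T _ _; exact ⟨0, zero_le, dvd_zero _, by simp⟩
  | succ q ih =>
    intro T hT hcard
    obtain ⟨l, hl⟩ : ∃ l : List ℕ, T = ↑l := ⟨T.toList, (Multiset.coe_toList T).symm⟩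
    have hllen : l.length = (q+1) * n := by
      rw [hl] at hcard; simpa using hcard
    have hsplitl : (↑(l.take n) : Multiset ℕ) + ↑(l.drop n) = T := by
      rw [hl, Multiset.coe_add, List.take_append_drop]
    -- block part
    obtain ⟨L₁, hL₁le, hL₁ne, hL₁dvd⟩ := aux_block n hn (l.take n)
      (by
        rw [List.length_take]
        have : n ≤ l.length := by rw [hllen]; nlinarith
        omega)
    have hL₁T : L₁ ≤ T := le_trans hL₁le (hsplitl ▸ Multiset.le_add_right _ _)
    have hL₁sum : n ≤ L₁.sum := by
      obtain ⟨a, ha⟩ := Multiset.exists_mem_of_ne_zero hL₁ne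
      have ha1 : 1 ≤ a := hT a (Multiset.mem_of_le hL₁T ha)
      have : a ≤ L₁.sum := Multiset.le_sum_of_mem ha
      exact Nat.le_of_dvd (by omega) hL₁dvd
    -- rest part
    obtain ⟨L₂, hL₂le, hL₂dvd, hL₂sum⟩ := ih (↑(l.drop n))
      (fun m hm => hT m (by rw [hl]; exact (Multiset.mem_coe).mpr (List.mem_of_mem_drop (by simpa using hm))))
      (by simp [List.length_drop, hllen]; ring_nf; omega)
    refine ⟨L₁ + L₂, ?_, ?_, ?_⟩
    · rw [← hsplitl]; exact add_le_add hL₁le hL₂le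
    · rw [Multiset.sum_add]; exact dvd_add hL₁dvd hL₂dvd
    · rw [Multiset.sum_add]
      calc (q+1) * n = n + q * n := by ring
        _ ≤ L₁.sum + L₂.sum := Nat.add_le_add hL₁sum hL₂sum

/-- The Erdős–Burgess constant of the cyclic semigroup `C_{k;n}` is `⌈k/n⌉·n`:
every sequence of `⌈k/n⌉·n` terms (each term `m • x` recorded by its exponent
`m ≥ 1`) has a nonempty idempotent-sum subsequence, i.e. a nonempty sub-multiset
`L` with `n ∣ Σ L` and `Σ L ≥ ⌈k/n⌉·n`; and there is an idempotent-sum free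
sequence of length `⌈k/n⌉·n − 1`. -/
theorem stmt12 (k n : ℕ) (hk : 1 ≤ k) (hn : 1 ≤ n) :
    (∀ T : Multiset ℕ, (∀ m ∈ T, 1 ≤ m) → Multiset.card T = ceilDivNat k n * n →
      ∃ L ≤ T, L ≠ 0 ∧ n ∣ L.sum ∧ ceilDivNat k n * n ≤ L.sum) ∧
    (∃ T : Multiset ℕ, (∀ m ∈ T, 1 ≤ m) ∧
      Multiset.card T = ceilDivNat k n * n - 1 ∧
      ∀ L ≤ T, L ≠ 0 → ¬ (n ∣ L.sum ∧ ceilDivNat k n * n ≤ L.sum)) := by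
  set q := ceilDivNat k n with hq
  have hq1 : 1 ≤ q := by
    rw [hq]; unfold ceilDivNat
    rw [Nat.le_div_iff_mul_le hn]
    omega
  constructor
  · intro T hT hcard
    obtain ⟨L, hLT, hdvd, hsum⟩ := aux_main n hn q T hT hcard
    refine ⟨L, hLT, ?_, hdvd, hsum⟩
    intro h
    rw [h] at hsum
    simp at hsum
    rcases hsum with h1 | h1 <;> omega
  · refine ⟨Multiset.replicate (q * n - 1) 1, ?_, by simp, ?_⟩
    · intro m hm
      rw [Multiset.eq_of_mem_replicate hm]
    · intro L hL _ ⟨_, hsum⟩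
      have h1 : L.sum ≤ (Multiset.replicate (q * n - 1) 1).sum := by
        obtain ⟨u, hu⟩ := Multiset.le_iff_exists_add.mp hL
        rw [hu, Multiset.sum_add]
        exact Nat.le_add_right _ _
      rw [Multiset.sum_replicate, smul_eq_mul, mul_one] at h1
      have : 1 ≤ q * n := Nat.one_le_iff_ne_zero.mpr (by positivity)
      omega
end

section
/- Let k > n ≥ 1 and let T be a multiset of positive integers with |T| ≥ ((⌈k/n⌉+1)·n)/2 − 1 that contains no nonempty sub-multiset L with n ∣ Σ_{m∈L} m and Σ_{m∈L} m ≥ ⌈k/n⌉·n. If T is behaving, then Σ_{m∈T} m ≤ ⌈k/n⌉·n − 1. -/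
/-- Let `k > n ≥ 1` and let `T` be an idempotent-sum free sequence over `C_{k;n}`
(recorded by its multiset of exponents) of length at least `((⌈k/n⌉+1)·n)/2 − 1`.
If `T` is behaving then `Σ T ≤ ⌈k/n⌉·n − 1`. -/
theorem stmt15 (k n : ℕ) (hn : 1 ≤ n) (hkn : n < k)
    (T : Multiset ℕ) (hpos : ∀ m ∈ T, 1 ≤ m)
    (hlen : (ceilDivNat k n + 1) * n / 2 - 1 ≤ Multiset.card T)
    (hfree : ∀ L ≤ T, L ≠ 0 → ¬ (n ∣ L.sum ∧ ceilDivNat k n * n ≤ L.sum))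
    (hb : Behaving T) :
    T.sum ≤ ceilDivNat k n * n - 1 := by
  set M := ceilDivNat k n * n with hM
  have hc1 : 1 ≤ ceilDivNat k n := by
    have : n ≤ k + n - 1 := by omega
    exact Nat.one_le_div_iff (by omega) |>.mpr this
  have hM1 : 1 ≤ M := Nat.one_le_iff_ne_zero.mpr (by positivity)
  by_contra h
  push_neg at h
  have hMle : M ≤ T.sum := by omega
  have : M ∈ ({s : ℕ | ∃ D ≤ T, D ≠ 0 ∧ D.sum = s} : Set ℕ) := by
    rw [hb]; exact ⟨hM1, hMle⟩
  obtain ⟨D, hDT, hD0, hDs⟩ := this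
  exact hfree D hDT hD0 ⟨hDs ▸ ⟨ceilDivNat k n, by rw [hM, Nat.mul_comm]⟩, by omega⟩
end

section
/- Let n = 1 and k > 1, and let T be a multiset of positive integers with |T| ≥ ⌈(k+1)/2⌉ − 1 (i.e. |T| ≥ (k+1)/2 − 1 when k is odd) such that every nonempty sub-multiset of T has sum at most k − 1 (equivalently, Σ T ≤ k − 1), and T is not behaving. Then k is odd and either T consists of (k−3)/2 copies of 1 together with one copy of (k+1)/2, or T consists of (k−1)/2 copies of 2. -/
lemma behave_aux (l : List ℕ)
    (hcond : ∀ i, (h : i < l.length) → l[i] ≤ (l.take i).sum + 1) :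
    ∀ s, 1 ≤ s → s ≤ l.sum → ∃ D, D ≤ (l : Multiset ℕ) ∧ D ≠ 0 ∧ D.sum = s := by
  induction l using List.reverseRecOn with
  | nil => intro s h1 h2; simp at h2; omega
  | append_singleton l' h ih =>
    have hcond' : ∀ i, (hi : i < l'.length) → l'[i] ≤ (l'.take i).sum + 1 := by
      intro i hi
      have := hcond i (by simp; omega)
      rwa [List.getElem_append_left, List.take_append_of_le_length (le_of_lt hi)] at this
    have hh : h ≤ l'.sum + 1 := by
      have := hcond l'.length (by simp)
      simpa using this
    intro s h1 h2
    rw [List.sum_append, List.sum_singleton] at h2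
    by_cases hcase : s ≤ l'.sum
    · obtain ⟨D, hD, hne, hsum⟩ := ih hcond' s h1 hcase
      refine ⟨D, le_trans hD ?_, hne, hsum⟩
      rw [← Multiset.coe_add]
      exact Multiset.le_add_right _ _
    · push_neg at hcase
      by_cases hs : s ≤ h
      · refine ⟨{h}, ?_, by simp, ?_⟩
        · rw [← Multiset.coe_add]
          have : ({h} : Multiset ℕ) = (([h] : List ℕ) : Multiset ℕ) := by rfl
          rw [this]
          exact Multiset.le_add_left _ _
        · simp; omega
      · push_neg at hs
        obtain ⟨D, hD, hne, hsum⟩ := ih hcond' (s - h) (by omega) (by omega)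
        refine ⟨h ::ₘ D, ?_, by simp, by simp [hsum]; omega⟩
        have e : ((l' ++ [h] : List ℕ) : Multiset ℕ) = h ::ₘ (l' : Multiset ℕ) := by
          rw [Multiset.cons_coe]
          exact Multiset.coe_eq_coe.2 (List.perm_append_singleton h l')
        rw [e]
        exact Multiset.cons_le_cons h hD


lemma replicate_of_le_sum {B : Multiset ℕ} {c : ℕ} (hc : ∀ x ∈ B, c ≤ x)
    (hs : B.sum ≤ Multiset.card B * c) : B = Multiset.replicate (Multiset.card B) c := by
  apply Multiset.eq_replicate_card.2
  intro x hx
  obtain ⟨B', rfl⟩ := Multiset.exists_cons_of_mem hx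
  have h1 : Multiset.card B' * c ≤ B'.sum := by
    have := Multiset.card_nsmul_le_sum (fun y hy => hc y (Multiset.mem_cons_of_mem hy))
    simpa [smul_eq_mul] using this
  have h2 : (x ::ₘ B').sum = x + B'.sum := by simp
  have h3 : Multiset.card (x ::ₘ B') = Multiset.card B' + 1 := by simp
  have hcx := hc x hx
  have h4 : Multiset.card (x ::ₘ B') * c = Multiset.card B' * c + c := by rw [h3]; ring
  omega

lemma gap_of_not_behaving {T : Multiset ℕ} (hpos : ∀ m ∈ T, 1 ≤ m)
    (hnb : ¬ Behaving T) :
    ∃ A B : Multiset ℕ, T = A + B ∧ B ≠ 0 ∧ ∀ b ∈ B, A.sum + 2 ≤ b := by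
  classical
  have hcoe : ((T.sort (· ≤ ·) : List ℕ) : Multiset ℕ) = T := T.sort_eq _
  set l := T.sort (· ≤ ·) with hldef
  have hsorted : l.Pairwise (· ≤ ·) := T.pairwise_sort _
  have hlsum : l.sum = T.sum := by rw [← hcoe]; simp
  by_cases hcond : ∀ i, (h : i < l.length) → l[i] ≤ (l.take i).sum + 1
  · exfalso; apply hnb
    unfold Behaving
    ext s
    simp only [Set.mem_setOf_eq, Set.mem_Icc]
    constructor
    · rintro ⟨D, hD, hne, rfl⟩
      constructor
      · obtain ⟨x, hx⟩ := Multiset.exists_mem_of_ne_zero hne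
        have h1 := hpos x (Multiset.mem_of_le hD hx)
        exact le_trans h1 (Multiset.single_le_sum (fun _ _ => Nat.zero_le _) _ hx)
      · obtain ⟨E, hE⟩ := Multiset.le_iff_exists_add.1 hD
        rw [hE, Multiset.sum_add]
        exact Nat.le_add_right _ _
    · rintro ⟨h1, h2⟩
      obtain ⟨D, hD, hne, hsum⟩ := behave_aux l hcond s h1 (by omega)
      exact ⟨D, by rwa [hcoe] at hD, hne, hsum⟩
  · push_neg at hcond
    obtain ⟨i, hi, hgap⟩ := hcond
    refine ⟨((l.take i : List ℕ) : Multiset ℕ), ((l.drop i : List ℕ) : Multiset ℕ), ?_, ?_, ?_⟩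
    · rw [← hcoe, Multiset.coe_add]
      congr 1
      exact (List.take_append_drop i l).symm
    · rw [Ne, Multiset.coe_eq_zero]
      intro hdrop
      have := List.length_drop (i := i) (l := l)
      rw [hdrop] at this
      simp at this
      omega
    · intro b hb
      rw [Multiset.mem_coe] at hb
      obtain ⟨j, hj, hjb⟩ := List.mem_iff_getElem.1 hb
      have hget : (l.drop i)[j] = l[i + j]'(by have := List.length_drop (i := i) (l := l); omega) :=
        List.getElem_drop (xs := l)
      have hle : l[i] ≤ l[i + j]'(by have := List.length_drop (i := i) (l := l); omega) := by
        rcases Nat.eq_zero_or_pos j with h0 | h0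
        · subst h0; simp
        · exact List.pairwise_iff_getElem.1 hsorted i (i + j) hi _ (by omega)
      have : (Multiset.sum ((l.take i : List ℕ) : Multiset ℕ)) = (l.take i).sum := by simp
      rw [this]
      omega

/-- For the cyclic semigroup `C_{k;1}` with `k > 1`: a non-behaving multiset `T`
of positive integers with `|T| ≥ ⌈(k+1)/2⌉ − 1` and `Σ T ≤ k − 1` (i.e. the
corresponding sequence is idempotent-sum free) forces `k` odd and `T` equal
either to `(k−3)/2` copies of `1` plus one copy of `(k+1)/2`, or to `(k−1)/2`
copies of `2`. -/
theorem stmt16 (k : ℕ) (hk : 1 < k)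
    (T : Multiset ℕ) (hpos : ∀ m ∈ T, 1 ≤ m)
    (hlen : (k + 2) / 2 - 1 ≤ Multiset.card T)
    (hsum : T.sum ≤ k - 1)
    (hnb : ¬ Behaving T) :
    Odd k ∧
      (T = Multiset.replicate ((k - 3) / 2) 1 + {(k + 1) / 2} ∨
       T = Multiset.replicate ((k - 1) / 2) 2) := by
  obtain ⟨A, B, hT, hBne, hB⟩ := gap_of_not_behaving hpos hnb
  have hApos : ∀ m ∈ A, 1 ≤ m := fun m hm => hpos m (by rw [hT]; exact Multiset.mem_add.2 (Or.inl hm))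
  have hcA : Multiset.card A ≤ A.sum := by
    have := Multiset.card_nsmul_le_sum hApos
    simpa [smul_eq_mul] using this
  have hB' : Multiset.card B * (A.sum + 2) ≤ B.sum := by
    have := Multiset.card_nsmul_le_sum hB
    simpa [smul_eq_mul] using this
  have hm : 0 < Multiset.card B := Multiset.card_pos.2 hBne
  have hcard : Multiset.card T = Multiset.card A + Multiset.card B := by rw [hT]; simp
  have hsum' : T.sum = A.sum + B.sum := by rw [hT]; simp
  have hmul : Multiset.card B * (A.sum + 2) = Multiset.card B * A.sum + 2 * Multiset.card B := by
    ring
  have hma : A.sum ≤ Multiset.card B * A.sum := Nat.le_mul_of_pos_left _ hm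
  -- key: 2 * card T ≤ T.sum
  have key : 2 * (Multiset.card A + Multiset.card B) ≤ T.sum := by omega
  have hodd : k % 2 = 1 := by omega
  have hkeq : T.sum = k - 1 ∧ Multiset.card A + Multiset.card B = (k - 1) / 2 := by omega
  have hkey2 : Multiset.card B * A.sum ≤ A.sum := by omega
  have hcase : A.sum = 0 ∨ Multiset.card B = 1 := by
    by_contra hc
    push_neg at hc
    obtain ⟨h0, h1⟩ := hc
    have h2 : 2 ≤ Multiset.card B := by omega
    have : 2 * A.sum ≤ Multiset.card B * A.sum := Nat.mul_le_mul_right _ h2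
    omega
  refine ⟨Nat.odd_iff.2 hodd, ?_⟩
  rcases hcase with h0 | h1
  · -- A.sum = 0, so A = 0 and T = B = replicate m 2
    have hA0 : A = 0 := by
      rw [← Multiset.card_eq_zero]
      omega
    have hc0 : Multiset.card A = 0 := by rw [hA0]; simp
    have hB2 : ∀ b ∈ B, 2 ≤ b := by intro b hb; have := hB b hb; omega
    have hBsum : B.sum ≤ Multiset.card B * 2 := by omega
    have hrep := replicate_of_le_sum hB2 hBsum
    right
    rw [hT, hA0, zero_add, hrep]
    congr 1
    omega
  · -- card B = 1
    obtain ⟨b, hb⟩ := Multiset.card_eq_one.1 h1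
    have hbB : b ∈ B := by rw [hb]; simp
    have hbge := hB b hbB
    have hBsumb : B.sum = b := by rw [hb]; simp
    have heq : b = A.sum + 2 ∧ Multiset.card A = A.sum := by omega
    have hArep : A = Multiset.replicate (Multiset.card A) 1 :=
      replicate_of_le_sum hApos (by omega)
    left
    have e1 : Multiset.card A = (k - 3) / 2 := by omega
    have e2 : b = (k + 1) / 2 := by omega
    rw [hT, hArep, hb, e1, e2]
end

section
/- Let n1, n2 ≥ 1 and k1, k2 ≥ 1 with (⌈k2/n2⌉−1)·n2 ≥ (⌈k1/n1⌉−1)·n1 and (n1/gcd(n1,n2)) dividing ⌈k2/n2⌉ − 1. Set m1 = Π_{p: v_p(n1) < v_p(n2)} p^{v_p(n1)} (product over primes p dividing n1 with v_p(n1) < v_p(n2)). Consider the multiset V over Z² consisting of ((⌈k2/n2⌉−1)·n2 + n1·n2/gcd(n1,n2) − 1) copies of (m1, 1) and (gcd(n1,n2) − 1) copies of (n1/m1, n2/gcd(n1,n2)). Then V contains no nonempty sub-multiset W = s·(m1,1) + t·(n1/m1, n2/gcd(n1,n2)) whose coordinate sums satisfy: first coordinate sum divisible by n1, second coordinate sum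 divisible by n2, and second coordinate sum ≥ ⌈k2/n2⌉·n2 and first coordinate sum ≥ ⌈k1/n1⌉·n1. -/
/-- Key construction for the lower bound
`I(C_{k1;n1} × C_{k2;n2}) ≥ max((⌈k1/n1⌉−1)n1, (⌈k2/n2⌉−1)n2) + D(Z_{n1}⊕Z_{n2})`:
the multiset consisting of `(⌈k2/n2⌉−1)·n2 + n1·n2/gcd(n1,n2) − 1` copies of `(m1, 1)`
and `gcd(n1,n2) − 1` copies of `(n1/m1, n2/gcd(n1,n2))` contains no nonempty
sub-multiset (determined by multiplicities `s`, `t`) whose coordinate index-sums are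
divisible by `n1`, `n2` and at least `⌈k1/n1⌉·n1`, `⌈k2/n2⌉·n2` respectively. -/
theorem stmt18 (n1 n2 k1 k2 : ℕ) (hn1 : 1 ≤ n1) (hn2 : 1 ≤ n2)
    (hk1 : 1 ≤ k1) (hk2 : 1 ≤ k2)
    (hge : (ceilDivNat k1 n1 - 1) * n1 ≤ (ceilDivNat k2 n2 - 1) * n2)
    (hdvd : n1 / Nat.gcd n1 n2 ∣ ceilDivNat k2 n2 - 1)
    (m1 : ℕ)
    (hm1 : m1 = ∏ p ∈ n1.primeFactors.filter
        (fun p => n1.factorization p < n2.factorization p), p ^ n1.factorization p) :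
    ∀ s t : ℕ,
      s ≤ (ceilDivNat k2 n2 - 1) * n2 + n1 * n2 / Nat.gcd n1 n2 - 1 →
      t ≤ Nat.gcd n1 n2 - 1 →
      ¬ (s = 0 ∧ t = 0) →
      ¬ (n1 ∣ s * m1 + t * (n1 / m1) ∧
         n2 ∣ s * 1 + t * (n2 / Nat.gcd n1 n2) ∧
         ceilDivNat k1 n1 * n1 ≤ s * m1 + t * (n1 / m1) ∧
         ceilDivNat k2 n2 * n2 ≤ s * 1 + t * (n2 / Nat.gcd n1 n2)) := by
  intro s t hs ht _hst
  rintro ⟨h1, h2, _h3, h4⟩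
  simp only [mul_one] at h2 h4
  have hn1p : 0 < n1 := hn1
  have hn2p : 0 < n2 := hn2
  have hn1ne : n1 ≠ 0 := by omega
  have hn2ne : n2 ≠ 0 := by omega
  set d := Nat.gcd n1 n2 with hd_def
  have hdn1 : d ∣ n1 := Nat.gcd_dvd_left _ _
  have hdn2 : d ∣ n2 := Nat.gcd_dvd_right _ _
  have hdpos : 0 < d := Nat.gcd_pos_of_pos_left _ hn1p
  set S := n1.primeFactors.filter
      (fun p => n1.factorization p < n2.factorization p) with hS_def
  -- basic facts about m1
  have hprime : ∀ p ∈ S, p.Prime := fun p hp =>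
    Nat.prime_of_mem_primeFactors (Finset.mem_filter.mp hp).1
  have hm1pos : 0 < m1 := by
    rw [hm1]
    exact Finset.prod_pos fun p hp => pow_pos (hprime p hp).pos _
  have hm1ne : m1 ≠ 0 := hm1pos.ne'
  have hm1fact : ∀ q : ℕ,
      m1.factorization q = if q ∈ S then n1.factorization q else 0 := by
    intro q
    rw [hm1, Nat.factorization_prod
      (fun p hp => pow_ne_zero _ (hprime p hp).pos.ne')]
    rw [Finset.sum_apply']
    rw [Finset.sum_congr rfl (fun p hp => by
      rw [(hprime p hp).factorization_pow, Finsupp.single_apply])]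
    exact Finset.sum_ite_eq' S q _
  -- m1 divides d
  have hm1d : m1 ∣ d := by
    have hdne : d ≠ 0 := hdpos.ne'
    rw [← Nat.factorization_le_iff_dvd hm1ne hdne, Finsupp.le_def]
    intro q
    rw [hm1fact q, hd_def, Nat.factorization_gcd hn1ne hn2ne, Finsupp.inf_apply]
    split_ifs with h
    · have := (Finset.mem_filter.mp h).2
      exact le_inf (le_refl _) (le_of_lt this)
    · exact Nat.zero_le _
  have hm1n1 : m1 ∣ n1 := hm1d.trans hdn1
  set b := n1 / m1 with hb_def
  have hbm1 : m1 * b = n1 := Nat.mul_div_cancel' hm1n1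
  have hbn1 : b ∣ n1 := ⟨m1, by rw [mul_comm]; exact hbm1.symm⟩
  have hbne : b ≠ 0 := by
    intro h
    rw [h, mul_zero] at hbm1
    omega
  have hbfact : ∀ q : ℕ,
      b.factorization q = n1.factorization q - m1.factorization q := by
    intro q
    rw [hb_def, Nat.factorization_div hm1n1, Finsupp.tsub_apply]
  -- membership in primeFactors via factorization
  have hmemfact : ∀ (n q : ℕ), q ∈ n.primeFactors ↔ n.factorization q ≠ 0 := by
    intro n q
    rw [← Nat.support_factorization, Finsupp.mem_support_iff]
  -- coprimality of m1 and b
  have hab : Nat.Coprime m1 b := by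
    rw [← Nat.disjoint_primeFactors hm1ne hbne]
    rw [Finset.disjoint_left]
    intro q hq hq'
    rw [hmemfact] at hq hq'
    rw [hm1fact q] at hq
    rw [hbfact q, hm1fact q] at hq'
    split_ifs at hq hq' with h
    · omega
    · exact hq rfl
  -- coprimality of b and n2/d
  have hn2dne : n2 / d ≠ 0 :=
    (Nat.div_pos (Nat.le_of_dvd hn2p hdn2) hdpos).ne'
  have hbn2d : Nat.Coprime b (n2 / d) := by
    rw [← Nat.disjoint_primeFactors hbne hn2dne]
    rw [Finset.disjoint_left]
    intro q hq hq'
    rw [hmemfact] at hq hq'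
    rw [hbfact q, hm1fact q] at hq
    rw [Nat.factorization_div hdn2, Finsupp.tsub_apply, hd_def,
      Nat.factorization_gcd hn1ne hn2ne, Finsupp.inf_apply] at hq'
    split_ifs at hq with h
    · omega
    · -- q not in S, but n1.factorization q ≠ 0, so q ∈ n1.primeFactors
      have hq1 : n1.factorization q ≠ 0 := by omega
      have hqn1 : q ∈ n1.primeFactors := (hmemfact n1 q).mpr hq1
      have hnlt : ¬ n1.factorization q < n2.factorization q := by
        intro hlt
        exact h (Finset.mem_filter.mpr ⟨hqn1, hlt⟩)
      have : n1.factorization q ⊓ n2.factorization q = n2.factorization q := by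
        rw [inf_eq_right]; omega
      omega
  -- basic quantities
  set C2 := ceilDivNat k2 n2 with hC2_def
  have hC2 : 1 ≤ C2 := by
    rw [hC2_def]
    unfold ceilDivNat
    rw [Nat.one_le_div_iff hn2p]
    omega
  obtain ⟨q, hq⟩ := h2
  have hC2q : C2 ≤ q := by
    rw [hq] at h4
    have h4' : C2 * n2 ≤ q * n2 := by rw [mul_comm q n2]; exact h4
    exact Nat.le_of_mul_le_mul_right h4' hn2p
  have hnd : d * (n2 / d) = n2 := Nat.mul_div_cancel' hdn2
  have hs_eq : s = (q * d - t) * (n2 / d) := by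
    have e1 : (q * d - t) * (n2 / d) = q * d * (n2 / d) - t * (n2 / d) :=
      Nat.sub_mul _ _ _
    have e2 : q * d * (n2 / d) = n2 * q := by
      rw [mul_assoc, hnd, mul_comm]
    omega
  -- divisibility of q*d - t by b
  have hbsum : b ∣ s * m1 + t * b := hbn1.trans h1
  have hbsm1 : b ∣ s * m1 := by
    have h' : b ∣ t * b + s * m1 := by rwa [add_comm] at hbsum
    exact (Nat.dvd_add_right (dvd_mul_left b t)).mp h'
  have hbs : b ∣ s := hab.symm.dvd_of_dvd_mul_right hbsm1
  have hbX : b ∣ q * d - t := by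
    rw [hs_eq] at hbs
    exact hbn2d.dvd_of_dvd_mul_right hbs
  -- divisibility of t by m1
  have hm1sum : m1 ∣ s * m1 + t * b := hm1n1.trans h1
  have hm1tb : m1 ∣ t * b := (Nat.dvd_add_right (dvd_mul_left m1 s)).mp hm1sum
  have hm1t : m1 ∣ t := hab.dvd_of_dvd_mul_right hm1tb
  have haX : m1 ∣ q * d - t := Nat.dvd_sub (hm1d.mul_left q) hm1t
  -- n1 divides (C2 - 1) * d
  obtain ⟨e, he⟩ := hdvd
  have hY : n1 ∣ (C2 - 1) * d := ⟨e, by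
    rw [he, mul_right_comm, Nat.div_mul_cancel hdn1]⟩
  -- n1 divides u
  have hau : m1 ∣ (q * d - t) - (C2 - 1) * d :=
    Nat.dvd_sub haX (hm1n1.trans hY)
  have hbu : b ∣ (q * d - t) - (C2 - 1) * d :=
    Nat.dvd_sub hbX (hbn1.trans hY)
  have hn1u : n1 ∣ (q * d - t) - (C2 - 1) * d := by
    rw [← hbm1]
    exact hab.mul_dvd_of_dvd_of_dvd hau hbu
  -- lower bound
  have hqd : C2 * d ≤ q * d := Nat.mul_le_mul_right d hC2q
  have hYd : (C2 - 1) * d + d = C2 * d := by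
    have h' : (C2 - 1 + 1) * d = C2 * d := by congr 1; omega
    rw [add_mul, one_mul] at h'
    exact h'
  have hlow : (C2 - 1) * d + 1 ≤ q * d - t := by omega
  -- upper bound
  have hmul : n1 * n2 / d = n1 * (n2 / d) := Nat.mul_div_assoc n1 hdn2
  rw [hmul] at hs
  have hsleft : ((C2 - 1) * d + n1) * (n2 / d) = (C2 - 1) * n2 + n1 * (n2 / d) := by
    rw [add_mul, mul_assoc, hnd]
  have hspos : 1 ≤ n1 * (n2 / d) :=
    Nat.mul_pos hn1p (Nat.pos_of_ne_zero hn2dne)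
  have hlt : (q * d - t) * (n2 / d) < ((C2 - 1) * d + n1) * (n2 / d) := by
    rw [← hs_eq, hsleft]
    omega
  have hlt2 : q * d - t < (C2 - 1) * d + n1 :=
    lt_of_mul_lt_mul_right hlt (Nat.zero_le _)
  -- contradiction
  have hupos : 0 < (q * d - t) - (C2 - 1) * d := by omega
  have hfinal := Nat.le_of_dvd hupos hn1u
  omega
end
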